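/- For every f ∈ L^∞(K), the Lipschitz function H(t) = (J_K f)(σ_K(t)) satisfies H'(t) = f(σ_K(t)) for almost every t ∈ [0, λ(K)]. -/

import Mathlib

/-! `π_K` is the distribution function of `λ|K`; it is 1-Lipschitz and pushes `λ|K` forward
to `λ` on `[0, λ(K)]`. The points `x ∈ K` with `σ_K (π_K x) ≠ x` lie on plateaus
`{y ∈ K | q < y, π_K y ≤ π_K q}` with `q` rational, each of which is null; so
`σ_K ∘ π_K = id` a.e. on `K`, and the change of variables `t = π_K x` turns `J_K f (σ_K s)` into
`∫ t in 0..s, f (σ_K t)`. The Lebesgue differentiation theorem then gives the derivative. -/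

open MeasureTheory Set

/-- Measure projection `π_K`. -/
noncomputable def piProj (K : Set ℝ) (x : ℝ) : ℝ :=
  (volume (Set.Icc (sInf K) x ∩ K)).toReal

/-- Left-endpoint selector `σ_K`. -/
noncomputable def sigmaSel (K : Set ℝ) (t : ℝ) : ℝ :=
  sInf {x ∈ K | piProj K x = t}

/-- Primitive `J_K f`. -/
noncomputable def JPrim (K : Set ℝ) (f : ℝ → ℝ) (x : ℝ) : ℝ :=
  ∫ y in Set.Icc (sInf K) x ∩ K, f y

variable {K : Set ℝ}

lemma Icc_sInf_inter_eq_Iic_inter (hK : BddBelow K) (x : ℝ) :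
    Icc (sInf K) x ∩ K = Iic x ∩ K := by
  ext y
  exact ⟨fun h => ⟨h.1.2, h.2⟩, fun h => ⟨⟨csInf_le hK h.2, h.1⟩, h.2⟩⟩

lemma volume_inter_ne_top (hK : IsCompact K) (s : Set ℝ) : volume (s ∩ K) ≠ ⊤ :=
  measure_ne_top_of_subset inter_subset_right hK.measure_ne_top

lemma piProj_eq_toReal (hK : BddBelow K) (x : ℝ) :
    piProj K x = (volume (Iic x ∩ K)).toReal := by
  rw [piProj, Icc_sInf_inter_eq_Iic_inter hK]

lemma ofReal_piProj (hK : IsCompact K) (x : ℝ) :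
    ENNReal.ofReal (piProj K x) = volume (Iic x ∩ K) := by
  rw [piProj_eq_toReal hK.bddBelow, ENNReal.ofReal_toReal (volume_inter_ne_top hK _)]

lemma piProj_nonneg (x : ℝ) : 0 ≤ piProj K x := ENNReal.toReal_nonneg

lemma piProj_le (hK : IsCompact K) (x : ℝ) : piProj K x ≤ (volume K).toReal :=
  ENNReal.toReal_mono hK.measure_ne_top (measure_mono inter_subset_right)

lemma piProj_mono (hK : IsCompact K) : Monotone (piProj K) := fun x y hxy => by
  simp only [piProj_eq_toReal hK.bddBelow]
  exact ENNReal.toReal_mono (volume_inter_ne_top hK _)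
    (measure_mono (inter_subset_inter_left _ (Iic_subset_Iic.2 hxy)))

lemma piProj_sInf (hK : IsCompact K) : piProj K (sInf K) = 0 := by
  have : Iic (sInf K) ∩ K ⊆ {sInf K} := fun y hy => le_antisymm hy.1 (csInf_le hK.bddBelow hy.2)
  rw [piProj_eq_toReal hK.bddBelow, measure_mono_null this (measure_singleton _),
    ENNReal.toReal_zero]

lemma piProj_sSup (hK : IsCompact K) : piProj K (sSup K) = (volume K).toReal := by
  have : Iic (sSup K) ∩ K = K := inter_eq_right.2 fun y hy => le_csSup hK.bddAbove hy
  rw [piProj_eq_toReal hK.bddBelow, this]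

lemma volume_Ioc_inter (hK : IsCompact K) {a b : ℝ} (hab : a ≤ b) :
    volume (Ioc a b ∩ K) = ENNReal.ofReal (piProj K b - piProj K a) := by
  have hunion : volume (Iic a ∩ K) + volume (Ioc a b ∩ K) = volume (Iic b ∩ K) := by
    rw [← measure_union ((Iic_disjoint_Ioc le_rfl).mono inter_subset_left inter_subset_left)
      (measurableSet_Ioc.inter hK.measurableSet), ← union_inter_distrib_right,
      Iic_union_Ioc_eq_Iic hab]
  rw [ENNReal.ofReal_sub _ (piProj_nonneg a), ofReal_piProj hK, ofReal_piProj hK, ← hunion,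
    ENNReal.add_sub_cancel_left (volume_inter_ne_top hK _)]

lemma piProj_lipschitz (hK : IsCompact K) : LipschitzWith 1 (piProj K) := by
  refine LipschitzWith.of_le_add fun x y => ?_
  rcases le_total x y with hxy | hyx
  · linarith [piProj_mono hK hxy, dist_nonneg (x := x) (y := y)]
  · have : ENNReal.ofReal (piProj K x - piProj K y) ≤ ENNReal.ofReal (x - y) := by
      rw [← volume_Ioc_inter hK hyx, ← Real.volume_Ioc]
      exact measure_mono inter_subset_left
    rw [ENNReal.ofReal_le_ofReal_iff (by linarith)] at this
    rw [Real.dist_eq, abs_of_nonneg (by linarith)]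
    linarith

lemma volume_plateau_eq_zero (hK : IsCompact K) (a : ℝ) :
    volume {y | y ∈ K ∧ a < y ∧ piProj K y ≤ piProj K a} = 0 := by
  set S := {y | y ∈ K ∧ a < y ∧ piProj K y ≤ piProj K a}
  rcases S.eq_empty_or_nonempty with hS | hS
  · rw [hS, measure_empty]
  have hSb : BddAbove S := hK.bddAbove.mono fun y hy => hy.1
  have hST : S ⊆ {y | a ≤ y ∧ piProj K y ≤ piProj K a} := fun _ hy => ⟨hy.2.1.le, hy.2.2⟩
  have hclosed : IsClosed {y | a ≤ y ∧ piProj K y ≤ piProj K a} :=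
    isClosed_Ici.inter (isClosed_le (piProj_lipschitz hK).continuous continuous_const)
  -- by continuity of `π_K`, the supremum of the plateau is still on it
  have hm := closure_minimal hST hclosed (csSup_mem_closure hS hSb)
  have hsub : S ⊆ Ioc a (sSup S) ∩ K := fun y hy => ⟨⟨hy.2.1, le_csSup hSb hy⟩, hy.1⟩
  refine measure_mono_null hsub ?_
  rw [volume_Ioc_inter hK hm.1, ENNReal.ofReal_eq_zero]
  linarith [hm.2]

lemma exists_mem_piProj_eq (hK : IsCompact K) (hne : K.Nonempty) {t : ℝ}
    (ht : t ∈ Icc 0 (volume K).toReal) : ∃ x ∈ K, piProj K x = t := by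
  obtain ⟨x, hx, hxt⟩ := intermediate_value_Icc (Real.sInf_le_sSup K hK.bddBelow hK.bddAbove)
    (piProj_lipschitz hK).continuous.continuousOn (by rwa [piProj_sInf hK, piProj_sSup hK])
  -- the last point of `K` left of `x` has the same image, since nothing of `K` lies in between
  set A := K ∩ Iic x
  have hAb : BddAbove A := hK.bddAbove.mono inter_subset_left
  have hy : sSup A ∈ K ∩ Iic x :=
    (hK.isClosed.inter isClosed_Iic).csSup_mem ⟨sInf K, hK.sInf_mem hne, hx.1⟩ hAb
  have hgap : Ioc (sSup A) x ∩ K = ∅ := eq_empty_iff_forall_notMem.2 fun z hz =>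
    (le_csSup hAb ⟨hz.2, hz.1.2⟩).not_gt hz.1.1
  have hdiff := volume_Ioc_inter hK hy.2
  rw [hgap, measure_empty, eq_comm, ENNReal.ofReal_eq_zero] at hdiff
  exact ⟨sSup A, hy.1, le_antisymm (hxt ▸ piProj_mono hK hy.2) (hxt ▸ by linarith)⟩

lemma sigmaSel_mem_and_piProj (hK : IsCompact K) (hne : K.Nonempty) {t : ℝ}
    (ht : t ∈ Icc 0 (volume K).toReal) :
    sigmaSel K t ∈ K ∧ piProj K (sigmaSel K t) = t := by
  obtain ⟨x, hx, hxt⟩ := exists_mem_piProj_eq hK hne ht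
  have hclosed : IsClosed {x ∈ K | piProj K x = t} :=
    hK.isClosed.inter (isClosed_singleton.preimage (piProj_lipschitz hK).continuous)
  exact hclosed.csInf_mem ⟨x, hx, hxt⟩ (hK.bddBelow.mono fun _ hy => hy.1)

lemma sigmaSel_piProj_le (hK : IsCompact K) {x : ℝ} (hx : x ∈ K) :
    sigmaSel K (piProj K x) ≤ x :=
  csInf_le (hK.bddBelow.mono fun _ hy => hy.1) ⟨hx, rfl⟩

lemma sigmaSel_monotoneOn (hK : IsCompact K) (hne : K.Nonempty) :
    MonotoneOn (sigmaSel K) (Icc 0 (volume K).toReal) := by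
  intro a ha b hb hab
  by_contra! h
  have := piProj_mono hK h.le
  rw [(sigmaSel_mem_and_piProj hK hne ha).2, (sigmaSel_mem_and_piProj hK hne hb).2] at this
  exact h.ne (congrArg (sigmaSel K) (le_antisymm hab this)).symm

lemma ae_sigmaSel_piProj (hK : IsCompact K) (hne : K.Nonempty) :
    ∀ᵐ x ∂volume.restrict K, sigmaSel K (piProj K x) = x := by
  rw [ae_restrict_iff' hK.measurableSet, ae_iff]
  refine measure_mono_null (fun x hx => ?_)
    (measure_iUnion_null fun q : ℚ => volume_plateau_eq_zero hK q)
  obtain ⟨hxK, hx⟩ := Classical.not_imp.1 hx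
  have hlt := (sigmaSel_piProj_le hK hxK).lt_of_ne hx
  obtain ⟨q, hσq, hqx⟩ := exists_rat_btwn hlt
  have hfib := (sigmaSel_mem_and_piProj hK hne ⟨piProj_nonneg x, piProj_le hK x⟩).2
  exact mem_iUnion.2 ⟨q, hxK, hqx, hfib.ge.trans (piProj_mono hK hσq.le)⟩

lemma Iic_sigmaSel_inter_ae_eq (hK : IsCompact K) (hne : K.Nonempty) {t : ℝ}
    (ht : t ∈ Icc 0 (volume K).toReal) :
    (Iic (sigmaSel K t) ∩ K : Set ℝ) =ᵐ[volume] (piProj K ⁻¹' Iic t ∩ K : Set ℝ) := by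
  have hfib := (sigmaSel_mem_and_piProj hK hne ht).2
  have hsub : Iic (sigmaSel K t) ∩ K ⊆ piProj K ⁻¹' Iic t ∩ K := fun z hz =>
    ⟨(piProj_mono hK hz.1).trans hfib.le, hz.2⟩
  refine hsub.eventuallyLE.antisymm (ae_le_set.2 ?_)
  refine measure_mono_null (fun z hz => ?_) (volume_plateau_eq_zero hK (sigmaSel K t))
  exact ⟨hz.1.2, lt_of_not_ge fun h => hz.2 ⟨h, hz.1.2⟩, hz.1.1.trans hfib.ge⟩

lemma volume_preimage_piProj_Iic_inter (hK : IsCompact K) (hne : K.Nonempty) {t : ℝ}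
    (ht : t ∈ Icc 0 (volume K).toReal) :
    volume (piProj K ⁻¹' Iic t ∩ K) = ENNReal.ofReal t := by
  rw [← measure_congr (Iic_sigmaSel_inter_ae_eq hK hne ht), ← ofReal_piProj hK,
    (sigmaSel_mem_and_piProj hK hne ht).2]

lemma map_piProj_restrict (hK : IsCompact K) (hne : K.Nonempty) :
    (volume.restrict K).map (piProj K) = volume.restrict (Icc 0 (volume K).toReal) := by
  have : IsFiniteMeasure (volume.restrict K) := isFiniteMeasure_restrict.2 hK.measure_ne_top
  refine Measure.ext_of_Iic _ _ fun a => ?_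
  rw [Measure.map_apply (piProj_lipschitz hK).continuous.measurable measurableSet_Iic,
    Measure.restrict_apply' hK.measurableSet, Measure.restrict_apply measurableSet_Iic]
  rcases lt_or_ge a 0 with ha | ha
  · have h1 : piProj K ⁻¹' Iic a ∩ K = ∅ :=
      eq_empty_iff_forall_notMem.2 fun z hz => (piProj_nonneg z).not_gt (lt_of_le_of_lt hz.1 ha)
    have h2 : Iic a ∩ Icc 0 (volume K).toReal = ∅ :=
      eq_empty_iff_forall_notMem.2 fun z hz => hz.2.1.not_gt (lt_of_le_of_lt hz.1 ha)
    rw [h1, h2]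
  · set t := min a (volume K).toReal
    have ht : t ∈ Icc 0 (volume K).toReal :=
      ⟨le_min ha ENNReal.toReal_nonneg, min_le_right _ _⟩
    have h1 : piProj K ⁻¹' Iic a ∩ K = piProj K ⁻¹' Iic t ∩ K := by
      ext z
      simp [t, piProj_le hK z]
    have h2 : Iic a ∩ Icc 0 (volume K).toReal = Icc 0 t := by
      ext z
      simp only [t, mem_inter_iff, mem_Iic, mem_Icc, le_min_iff]
      tauto
    rw [h1, h2, volume_preimage_piProj_Iic_inter hK hne ht, Real.volume_Icc, sub_zero]

section Primitive

variable {f : ℝ → ℝ}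

lemma aestronglyMeasurable_comp_sigmaSel (hK : IsCompact K) (hne : K.Nonempty)
    (hf : Measurable f) :
    AEStronglyMeasurable (fun t => f (sigmaSel K t))
      (volume.restrict (Icc 0 (volume K).toReal)) :=
  (hf.comp_aemeasurable (aemeasurable_restrict_of_monotoneOn measurableSet_Icc
    (sigmaSel_monotoneOn hK hne))).aestronglyMeasurable

lemma integrableOn_comp_sigmaSel (hK : IsCompact K) (hne : K.Nonempty) (hf : Measurable f)
    (hfi : IntegrableOn f K) :
    IntegrableOn (fun t => f (sigmaSel K t)) (Icc 0 (volume K).toReal) := by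
  have hσ := aestronglyMeasurable_comp_sigmaSel hK hne hf
  rw [← map_piProj_restrict hK hne] at hσ
  rw [IntegrableOn, ← map_piProj_restrict hK hne,
    integrable_map_measure hσ (piProj_lipschitz hK).continuous.measurable.aemeasurable]
  refine hfi.congr ?_
  filter_upwards [ae_sigmaSel_piProj hK hne] with x hx
  simp only [Function.comp_apply, hx]

lemma JPrim_sigmaSel (hK : IsCompact K) (hne : K.Nonempty) (hf : Measurable f) {s : ℝ}
    (hs : s ∈ Icc 0 (volume K).toReal) :
    JPrim K f (sigmaSel K s) = ∫ t in 0..s, f (sigmaSel K t) := by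
  have hπ : Measurable (piProj K) := (piProj_lipschitz hK).continuous.measurable
  have hσ := aestronglyMeasurable_comp_sigmaSel hK hne hf
  rw [← map_piProj_restrict hK hne] at hσ
  calc JPrim K f (sigmaSel K s) = ∫ x in piProj K ⁻¹' Iic s ∩ K, f x := by
        rw [JPrim, Icc_sInf_inter_eq_Iic_inter hK.bddBelow,
          setIntegral_congr_set (Iic_sigmaSel_inter_ae_eq hK hne hs)]
    _ = ∫ x in piProj K ⁻¹' Iic s, f (sigmaSel K (piProj K x)) ∂volume.restrict K := by
        rw [Measure.restrict_restrict (hπ measurableSet_Iic)]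
        refine integral_congr_ae ?_
        filter_upwards [ae_restrict_of_ae_restrict_of_subset inter_subset_right
          (ae_sigmaSel_piProj hK hne)] with x hx
        rw [hx]
    _ = ∫ t in Iic s, f (sigmaSel K t) ∂(volume.restrict K).map (piProj K) :=
        (setIntegral_map measurableSet_Iic hσ hπ.aemeasurable).symm
    _ = ∫ t in 0..s, f (sigmaSel K t) := by
        have : Iic s ∩ Icc 0 (volume K).toReal = Icc 0 s := by
          ext z
          simp only [mem_inter_iff, mem_Iic, mem_Icc]
          constructor
          · exact fun h => ⟨h.2.1, h.1⟩
          · exact fun h => ⟨h.2, h.1, h.2.trans hs.2⟩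
        rw [map_piProj_restrict hK hne, Measure.restrict_restrict measurableSet_Iic, this,
          intervalIntegral.integral_of_le hs.1, integral_Icc_eq_integral_Ioc]

end Primitive

theorem stmt14 (K : Set ℝ) (hK : IsCompact K) (hpos : 0 < volume K)
    (f : ℝ → ℝ) (hf : Measurable f) (hfb : MemLp f ⊤ (volume.restrict K)) :
    ∀ᵐ t ∂(volume.restrict (Set.Icc (0 : ℝ) (volume K).toReal)),
      HasDerivAt (fun s => JPrim K f (sigmaSel K s)) (f (sigmaSel K t)) t := by
  have hne : K.Nonempty := nonempty_of_measure_ne_zero hpos.ne'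
  have : IsFiniteMeasure (volume.restrict K) := isFiniteMeasure_restrict.2 hK.measure_ne_top
  have hint : IntervalIntegrable (fun t => f (sigmaSel K t)) volume 0 (volume K).toReal :=
    (intervalIntegrable_iff_integrableOn_Icc_of_le ENNReal.toReal_nonneg).2
      (integrableOn_comp_sigmaSel hK hne hf (hfb.integrable le_top))
  rw [← Measure.restrict_congr_set Ioo_ae_eq_Icc]
  filter_upwards [ae_restrict_mem measurableSet_Ioo,
    ae_restrict_of_ae hint.ae_hasDerivAt_integral] with t ht hderiv
  have hmem : t ∈ uIcc 0 (volume K).toReal := by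
    rw [uIcc_of_le ENNReal.toReal_nonneg]; exact Ioo_subset_Icc_self ht
  refine (hderiv hmem 0 left_mem_uIcc).congr_of_eventuallyEq ?_
  filter_upwards [isOpen_Ioo.mem_nhds ht] with s hs
  exact JPrim_sigmaSel hK hne hf (Ioo_subset_Icc_self hs)
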